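/- arXiv:1103.3537 — 7 statements merged into one kernel-verified Lean document; each statement's English description precedes it below -/
import Mathlib

section
/- Let k be a field and let α, a, b, c, d ∈ k satisfy the twelve pentagon equations of the Fibonacci category: αa² + bc = α², αab + bd = 0, αcb + d² = 1, αca + dc = 0, a³ + bc = a², a²b + bd = b, ca² + cd = c, abc + d² = 0, αab = ab, αcb = d, αca = ca, α²d = cb. Then α = 1, b ≠ 0, d = −a, c = −a·b⁻¹ and a² = a + 1. Conversely, for any a, b ∈ k with a² = a + 1 and b ≠ 0, the values α = 1, d = −a, c = −a·b⁻¹ satisfy all twelve equations. -/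
/-!
Subtracting the eighth pentagon equation from the third gives `c * b * (α - a) = 1`, so `b` and `c`
are invertible. The eleventh equation then forces `α = 1` (the alternative `a = 0` contradicts
the fifth), after which the twelfth reads `d = c * b`. Now `d + d ^ 2 = 1` and `d (a + d) = 0`, so
`d = -a` and `a ^ 2 = a + 1`. Conversely every equation is a combination of `a ^ 2 = a + 1` and
`c * b = -a`.
-/

section Domain

variable {R : Type*} [CommRing R] [IsDomain R] {α a b c d : R}

theorem eq_one_of_mul_mul_sub_eq_one (h5 : a ^ 3 + b * c = a ^ 2) (h11 : α * c * a = c * a)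
    (hcb : c * b * (α - a) = 1) : α = 1 := by
  have hc : c ≠ 0 := left_ne_zero_of_mul (left_ne_zero_of_mul_eq_one hcb)
  have hca : c * a * (α - 1) = 0 := by linear_combination h11
  rcases mul_eq_zero.mp hca with hca | hα
  · have ha : a = 0 := (mul_eq_zero.mp hca).resolve_left hc
    subst ha
    have hbc : b * c = 0 := by linear_combination h5
    exact absurd hcb (by simp [mul_comm c b, hbc])
  · exact sub_eq_zero.mp hα

theorem eq_neg_of_add_sq_eq_one (hd : d + d ^ 2 = 1) (h : a * d + d ^ 2 = 0) : d = -a := by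
  have hd0 : d ≠ 0 := by
    rintro rfl
    simp at hd
  have hda : d * (a + d) = 0 := by linear_combination h
  exact eq_neg_of_add_eq_zero_right ((mul_eq_zero.mp hda).resolve_left hd0)

end Domain

theorem fibonacci_pentagon_solution {k : Type*} [Field k] {α a b c d : k}
    (h3 : α * c * b + d ^ 2 = 1) (h5 : a ^ 3 + b * c = a ^ 2) (h8 : a * b * c + d ^ 2 = 0)
    (h11 : α * c * a = c * a) (h12 : α ^ 2 * d = c * b) :
    α = 1 ∧ b ≠ 0 ∧ d = -a ∧ c = -a * b⁻¹ ∧ a ^ 2 = a + 1 := by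
  have hcb : c * b * (α - a) = 1 := by linear_combination h3 - h8
  have hb : b ≠ 0 := right_ne_zero_of_mul (left_ne_zero_of_mul_eq_one hcb)
  obtain rfl : α = 1 := eq_one_of_mul_mul_sub_eq_one h5 h11 hcb
  have hd : d = c * b := by linear_combination h12
  have hd2 : d + d ^ 2 = 1 := by linear_combination h3 + hd
  have hda : d = -a := eq_neg_of_add_sq_eq_one hd2 (by linear_combination h8 + a * hd)
  refine ⟨rfl, hb, hda, ?_, by linear_combination hd2 + (a - d - 1) * hda⟩
  rw [eq_mul_inv_iff_mul_eq₀ hb]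
  linear_combination hda - hd

/-- Solutions of the pentagon equations for the Fibonacci category. -/
theorem fibonacci_pentagon_solutions {k : Type*} [Field k] :
    (∀ α a b c d : k,
      α * a ^ 2 + b * c = α ^ 2 →
      α * a * b + b * d = 0 →
      α * c * b + d ^ 2 = 1 →
      α * c * a + d * c = 0 →
      a ^ 3 + b * c = a ^ 2 →
      a ^ 2 * b + b * d = b →
      c * a ^ 2 + c * d = c →
      a * b * c + d ^ 2 = 0 →
      α * a * b = a * b →
      α * c * b = d →
      α * c * a = c * a →
      α ^ 2 * d = c * b →
      α = 1 ∧ b ≠ 0 ∧ d = -a ∧ c = -a * b⁻¹ ∧ a ^ 2 = a + 1) ∧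
    (∀ a b : k, a ^ 2 = a + 1 → b ≠ 0 →
      ∀ α c d : k, α = 1 → d = -a → c = -a * b⁻¹ →
      α * a ^ 2 + b * c = α ^ 2 ∧
      α * a * b + b * d = 0 ∧
      α * c * b + d ^ 2 = 1 ∧
      α * c * a + d * c = 0 ∧
      a ^ 3 + b * c = a ^ 2 ∧
      a ^ 2 * b + b * d = b ∧
      c * a ^ 2 + c * d = c ∧
      a * b * c + d ^ 2 = 0 ∧
      α * a * b = a * b ∧
      α * c * b = d ∧
      α * c * a = c * a ∧
      α ^ 2 * d = c * b) := by
  refine ⟨fun α a b c d _ _ h3 _ h5 _ _ h8 _ _ h11 h12 ↦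
    fibonacci_pentagon_solution h3 h5 h8 h11 h12, ?_⟩
  intro a b ha hb α c d hα hd hc
  have hcb : c * b = -a := by rw [hc, inv_mul_cancel_right₀ hb]
  subst hα hd
  exact ⟨by linear_combination ha + hcb, by ring, by linear_combination hcb + ha, by ring,
    by linear_combination a * ha + hcb, by linear_combination b * ha,
    by linear_combination c * ha, by linear_combination a * hcb, by ring, by linear_combination hcb, by ring,
    by linear_combination -hcb⟩
end

section
/- Let k be a field and a ∈ k with a² = a + 1. Suppose u, w ∈ k satisfy the hexagon (braiding coherence) equations of the Fibonacci category: u² = w, u²a = ua² − a, wu = ua − a, and −w² = a − u. Then w = u² and u² = ua − 1. Conversely, if w = u² and u² = ua − 1 then all four equations hold. In particular a braiding on the Fibonacci category is completely determined by the single scalar u satisfying u² = ua − 1. -/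
/-!
The second hexagon equation is `a * (u ^ 2 - u * a + 1) = 0` and `a ≠ 0`, so it alone forces
`u ^ 2 = u * a - 1`. Conversely, this quadratic relation for `u` together with `a ^ 2 = a + 1`
reduces `u ^ 3` and `u ^ 4` to expressions linear in `u`, which are the remaining equations
once `w = u ^ 2`.
-/

namespace FibonacciBraiding

variable {R : Type*} [CommRing R] {a u : R}

theorem sq_eq_mul_sub_one_of_sq_mul_eq [NoZeroDivisors R] (ha : a ≠ 0)
    (h : u ^ 2 * a = u * a ^ 2 - a) : u ^ 2 = u * a - 1 :=
  mul_left_cancel₀ ha (by linear_combination h)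

theorem pow_three_eq (ha : a ^ 2 = a + 1) (hu : u ^ 2 = u * a - 1) : u ^ 3 = u * a - a := by
  linear_combination (u + a) * hu + u * ha

theorem pow_four_eq (ha : a ^ 2 = a + 1) (hu : u ^ 2 = u * a - 1) : u ^ 4 = u - a := by
  linear_combination (u ^ 2 + u * a + a ^ 2 - 1) * hu + (u * a + u - 1) * ha

end FibonacciBraiding

/-- Solutions of the hexagon (braiding coherence) equations for the Fibonacci category. -/
theorem fibonacci_hexagon_solutions {k : Type*} [Field k] (a : k) (ha : a ^ 2 = a + 1) :
    (∀ u w : k,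
      u ^ 2 = w →
      u ^ 2 * a = u * a ^ 2 - a →
      w * u = u * a - a →
      -w ^ 2 = a - u →
      w = u ^ 2 ∧ u ^ 2 = u * a - 1) ∧
    (∀ u w : k, w = u ^ 2 → u ^ 2 = u * a - 1 →
      u ^ 2 = w ∧
      u ^ 2 * a = u * a ^ 2 - a ∧
      w * u = u * a - a ∧
      -w ^ 2 = a - u) := by
  have ha0 : a ≠ 0 := by
    rintro rfl
    norm_num at ha
  refine ⟨fun u w hw h2 _ _ =>
    ⟨hw.symm, FibonacciBraiding.sq_eq_mul_sub_one_of_sq_mul_eq ha0 h2⟩, ?_⟩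
  rintro u w rfl hu
  exact ⟨rfl, by linear_combination a * hu,
    by linear_combination FibonacciBraiding.pow_three_eq ha hu,
    by linear_combination -FibonacciBraiding.pow_four_eq ha hu⟩
end

section
/- Let k be a field, a ∈ k with a² = a + 1, and b ∈ k nonzero. Then there exist nonzero f, g ∈ k such that, for G = diag(f, g²), one has G⁻¹ · [[a, b], [−a·b⁻¹, −a]] · G = [[a, 1], [−a, −a]]. Hence up to monoidal equivalence the associativity constraints for the Fibonacci category correspond exactly to the solutions a of a² = a + 1, with normalized matrix A = [[a, 1], [−a, −a]]. -/
namespace Matrix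

variable {K : Type*} [Field K]

theorem inv_diagonal_of_ne_zero {n : Type*} [Fintype n] [DecidableEq n] {d : n → K}
    (hd : ∀ i, d i ≠ 0) : (diagonal d)⁻¹ = diagonal d⁻¹ :=
  inv_eq_left_inv <| by
    rw [diagonal_mul_diagonal, ← diagonal_one]
    exact congrArg diagonal (funext fun i => inv_mul_cancel₀ (hd i))

theorem diagonal_inv_mul_mul_diagonal {n : Type*} [Fintype n] [DecidableEq n] {d : n → K}
    (hd : ∀ i, d i ≠ 0) (M : Matrix n n K) :
    (diagonal d)⁻¹ * M * diagonal d = of fun i j => (d i)⁻¹ * M i j * d j := by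
  ext i j
  simp [inv_diagonal_of_ne_zero hd]

theorem diagonal_conj_fin_two {x y : K} (hx : x ≠ 0) (hy : y ≠ 0) (p q r s : K) :
    (!![x, 0; 0, y] : Matrix (Fin 2) (Fin 2) K)⁻¹ * !![p, q; r, s] * !![x, 0; 0, y] =
      !![p, x⁻¹ * q * y; y⁻¹ * r * x, s] := by
  rw [← diagonal_vec2, diagonal_inv_mul_mul_diagonal (by simp [Fin.forall_fin_two, hx, hy])]
  ext i j
  fin_cases i <;> fin_cases j <;> simp <;> field_simp

end Matrix

theorem fibonacci_associativity_normalization_general {k : Type*} [Field k]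
    (a b : k) (hb : b ≠ 0) :
    ∃ f g : k, f ≠ 0 ∧ g ≠ 0 ∧
      (!![f, 0; 0, g ^ 2] : Matrix (Fin 2) (Fin 2) k)⁻¹ *
          !![a, b; -a * b⁻¹, -a] * !![f, 0; 0, g ^ 2] =
        !![a, 1; -a, -a] := by
  refine ⟨b, 1, hb, one_ne_zero, ?_⟩
  rw [one_pow, Matrix.diagonal_conj_fin_two hb one_ne_zero]
  simp [hb]

/-- Up to monoidal equivalence the associativity constraint of the Fibonacci category can be
normalized so that its matrix becomes `[[a, 1], [-a, -a]]`. -/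
theorem fibonacci_associativity_normalization {k : Type*} [Field k]
    (a b : k) (ha : a ^ 2 = a + 1) (hb : b ≠ 0) :
    ∃ f g : k, f ≠ 0 ∧ g ≠ 0 ∧
      (!![f, 0; 0, g ^ 2] : Matrix (Fin 2) (Fin 2) k)⁻¹ *
          !![a, b; -a * b⁻¹, -a] * !![f, 0; 0, g ^ 2] =
        !![a, 1; -a, -a] :=
  fibonacci_associativity_normalization_general a b hb
end

section
/- Let u ∈ ℂ be a primitive 10th root of unity and set a = u + u⁻¹. Then: (i) 1 + (1 − a)² = 3 − a and 3 − a ≠ 0; (ii) 1 + u⁻²(1 − a)² = u⁻² − u⁻⁴; (iii) 1 + u²(1 − a)² = u² − u⁴; (iv) (1 + u⁻²(1 − a)²) / (1 + u²(1 − a)²) = u⁻¹. -/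
/-!
A primitive 10th root of unity `u` is a root of `Φ₁₀ = X⁴ - X³ + X² - X + 1` (as `u⁵ = -1` and
`u ≠ -1`), so `a = u + u⁻¹` satisfies `a² = a + 1`, whence `(1 - a)² = 2 - a`. Substituting this,
both Gauss sums reduce modulo `Φ₁₀` to `v² - v⁴` with `v = u, u⁻¹`, and their quotient is
`-u⁻⁶ = u⁻¹` because `u⁵ = -1`.
-/

namespace IsPrimitiveRoot

variable {K : Type*} [Field K] {u : K}

theorem pow_five_eq_neg_one_of_ten (hu : IsPrimitiveRoot u 10) : u ^ 5 = -1 :=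
  (hu.pow_of_dvd (by norm_num) (by norm_num : 5 ∣ 10)).eq_neg_one_of_two_right

theorem sq_ne_one_of_ten (hu : IsPrimitiveRoot u 10) : u ^ 2 ≠ 1 :=
  hu.pow_ne_one_of_pos_of_lt (by norm_num) (by norm_num)

theorem cyclotomic_ten_eq_zero (hu : IsPrimitiveRoot u 10) :
    u ^ 4 - u ^ 3 + u ^ 2 - u + 1 = 0 := by
  have hu_ne : u + 1 ≠ 0 := fun h => hu.sq_ne_one_of_ten (by linear_combination (u - 1) * h)
  have hfac : (u + 1) * (u ^ 4 - u ^ 3 + u ^ 2 - u + 1) = 0 := by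
    linear_combination hu.pow_five_eq_neg_one_of_ten
  exact (mul_eq_zero.mp hfac).resolve_left hu_ne

theorem add_inv_sq_eq_of_ten (hu : IsPrimitiveRoot u 10) :
    (u + u⁻¹) ^ 2 = u + u⁻¹ + 1 := by
  have hu0 : u ≠ 0 := hu.ne_zero (by norm_num)
  field_simp
  linear_combination hu.cyclotomic_ten_eq_zero

theorem one_add_sq_mul_one_sub_add_inv_sq_of_ten (hu : IsPrimitiveRoot u 10) :
    1 + u ^ 2 * (1 - (u + u⁻¹)) ^ 2 = u ^ 2 - u ^ 4 := by
  have hu0 : u ≠ 0 := hu.ne_zero (by norm_num)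
  field_simp
  linear_combination 2 * hu.cyclotomic_ten_eq_zero

theorem inv_sq_sub_inv_pow_four_div_of_ten (hu : IsPrimitiveRoot u 10) :
    (u⁻¹ ^ 2 - u⁻¹ ^ 4) / (u ^ 2 - u ^ 4) = u⁻¹ := by
  have hu0 : u ≠ 0 := hu.ne_zero (by norm_num)
  have hsq : 1 - u ^ 2 ≠ 0 := sub_ne_zero.mpr (Ne.symm hu.sq_ne_one_of_ten)
  rw [show u ^ 2 - u ^ 4 = u ^ 2 * (1 - u ^ 2) by ring]
  field_simp
  linear_combination (u ^ 2 - 1) * hu.pow_five_eq_neg_one_of_ten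

end IsPrimitiveRoot

theorem one_add_one_sub_sq_of_sq_eq_add_one {R : Type*} [CommRing R] {a : R}
    (ha : a ^ 2 = a + 1) :
    1 + (1 - a) ^ 2 = 3 - a := by
  linear_combination ha

theorem three_sub_ne_zero_of_sq_eq_add_one {R : Type*} [Ring R] [CharZero R] {a : R}
    (ha : a ^ 2 = a + 1) : 3 - a ≠ 0 := by
  intro h
  rw [← eq_of_sub_eq_zero h] at ha
  norm_num at ha

/-- Dimension and central charge computations for the Fibonacci modular category. -/
theorem fibonacci_dimension_and_central_charge
    (u : ℂ) (hu : IsPrimitiveRoot u 10) (a : ℂ) (ha : a = u + u⁻¹) :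
    (1 + (1 - a) ^ 2 = 3 - a ∧ 3 - a ≠ 0) ∧
    1 + u⁻¹ ^ 2 * (1 - a) ^ 2 = u⁻¹ ^ 2 - u⁻¹ ^ 4 ∧
    1 + u ^ 2 * (1 - a) ^ 2 = u ^ 2 - u ^ 4 ∧
    (1 + u⁻¹ ^ 2 * (1 - a) ^ 2) / (1 + u ^ 2 * (1 - a) ^ 2) = u⁻¹ := by
  have hgolden : a ^ 2 = a + 1 := ha ▸ hu.add_inv_sq_eq_of_ten
  have htau_plus : 1 + u⁻¹ ^ 2 * (1 - a) ^ 2 = u⁻¹ ^ 2 - u⁻¹ ^ 4 := by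
    simpa only [ha, inv_inv, add_comm u⁻¹ u] using hu.inv.one_add_sq_mul_one_sub_add_inv_sq_of_ten
  have htau_minus : 1 + u ^ 2 * (1 - a) ^ 2 = u ^ 2 - u ^ 4 :=
    ha ▸ hu.one_add_sq_mul_one_sub_add_inv_sq_of_ten
  refine ⟨⟨one_add_one_sub_sq_of_sq_eq_add_one hgolden,
    three_sub_ne_zero_of_sq_eq_add_one hgolden⟩, htau_plus, htau_minus, ?_⟩
  rw [htau_plus, htau_minus]
  exact hu.inv_sq_sub_inv_pow_four_div_of_ten
end

section
/- Let M be a finite nonempty type and N a Fibonacci NIM-matrix on M that is connected. Then M has exactly two elements, and they can be labeled m, n so that N m m = 0, N m n = N n m = 1, and N n n = 1. In other words, up to isomorphism there is only one connected NIM-graph for the Fibonacci fusion rule. -/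
/-- A Fibonacci NIM-matrix on a finite type `M`: symmetric and satisfying `N² = N + I`,
encoding a NIM-representation of the Fibonacci fusion rule `{1, x}`, `x² = 1 + x`. -/
def IsFibNIM {M : Type*} [Fintype M] [DecidableEq M] (N : M → M → ℕ) : Prop :=
  (∀ m n : M, N m n = N n m) ∧
  (∀ m n : M, ∑ k, N m k * N k n = N m n + (if m = n then 1 else 0))

/-- Connectedness of the NIM-graph: there is no partition of `M` into two nonempty parts
not connected by any edge. -/
def FibNIMConnected {M : Type*} (N : M → M → ℕ) : Prop :=
  ¬ ∃ A : Set M, A.Nonempty ∧ Aᶜ.Nonempty ∧ ∀ a ∈ A, ∀ b ∈ Aᶜ, N a b = 0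

/-!
Since `N` is symmetric, the diagonal of `N² = N + I` reads `∑ₖ N m k ² = N m m + 1`, so every
diagonal entry is `0` or `1`; off the diagonal, `N m n ≥ N m n * (N m m + N n n)` forbids two
adjacent loops. Hence some vertex `m` has no loop, its row is a single edge to a vertex `n`, the
entry `(m, n)` of `N² = N + I` forces a loop at `n`, and then the row of `n` is used up by `m`
and `n`. So `{m, n}` has no edges leaving it, and by connectedness it is everything.
-/

open Finset

lemma eq_zero_of_sum_univ_le_sum {ι : Type*} [Fintype ι] [DecidableEq ι] {s : Finset ι}
    {f : ι → ℕ} (h : ∑ i, f i ≤ ∑ i ∈ s, f i) {i : ι} (hi : i ∉ s) : f i = 0 := by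
  have hcompl : ∑ j ∈ sᶜ, f j = 0 := by
    have := sum_add_sum_compl s f
    omega
  exact (sum_eq_zero_iff.mp hcompl) i (mem_compl.mpr hi)

lemma FibNIMConnected.eq_univ_of_forall_eq_zero {M : Type*} {N : M → M → ℕ}
    (hconn : FibNIMConnected N) {A : Set M} (hA : A.Nonempty)
    (hclosed : ∀ a ∈ A, ∀ b ∉ A, N a b = 0) : A = Set.univ := by
  by_contra hne
  exact hconn ⟨A, hA, Set.nonempty_compl.mpr hne, hclosed⟩

namespace IsFibNIM

variable {M : Type*} [Fintype M] [DecidableEq M] {N : M → M → ℕ}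

lemma sum_sq_row (hN : IsFibNIM N) (m : M) : ∑ k, N m k ^ 2 = N m m + 1 := by
  have hfus := hN.2 m m
  rw [if_pos rfl] at hfus
  rw [← hfus]
  exact sum_congr rfl fun k _ => by rw [sq, hN.1 k m]

lemma sq_le_diag_add_one (hN : IsFibNIM N) (m n : M) : N m n ^ 2 ≤ N m m + 1 :=
  hN.sum_sq_row m ▸ single_le_sum (f := fun k => N m k ^ 2) (fun _ _ => Nat.zero_le _) (mem_univ n)

lemma diag_le_one (hN : IsFibNIM N) (m : M) : N m m ≤ 1 := by
  nlinarith [hN.sq_le_diag_add_one m m]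

lemma diag_add_diag_le_one (hN : IsFibNIM N) {m n : M} (hmn : m ≠ n) (h : N m n ≠ 0) :
    N m m + N n n ≤ 1 := by
  have hpair : N m m * N m n + N m n * N n n ≤ N m n := by
    have := sum_le_sum_of_subset (f := fun k => N m k * N k n) (subset_univ {m, n})
    rwa [sum_pair hmn, hN.2 m n, if_neg hmn, add_zero] at this
  have : N m n * (N m m + N n n) ≤ N m n * 1 := by linarith
  exact Nat.le_of_mul_le_mul_left this (Nat.pos_of_ne_zero h)

lemma exists_diag_eq_zero [Nonempty M] (hN : IsFibNIM N) : ∃ m, N m m = 0 := by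
  obtain ⟨m⟩ := ‹Nonempty M›
  rcases Nat.le_one_iff_eq_zero_or_eq_one.mp (hN.diag_le_one m) with hm | hm
  · exact ⟨m, hm⟩
  obtain ⟨n, hnm, hmn⟩ : ∃ n, n ≠ m ∧ N m n ≠ 0 := by
    by_contra! h
    have hrow := hN.sum_sq_row m
    rw [sum_eq_single m (fun k _ hk => by rw [h k hk]; rfl) (by simp), hm] at hrow
    omega
  exact ⟨n, by have := hN.diag_add_diag_le_one hnm.symm hmn; omega⟩

lemma row_eq_single_of_diag_eq_zero (hN : IsFibNIM N) {m : M} (hm : N m m = 0) :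
    ∃ n, n ≠ m ∧ N m n = 1 ∧ ∀ k ≠ n, N m k = 0 := by
  have hrow : ∑ k, N m k ^ 2 = 1 := by rw [hN.sum_sq_row, hm]
  obtain ⟨n, -, hn⟩ := exists_ne_zero_of_sum_ne_zero (hrow ▸ one_ne_zero)
  have hmn : N m n = 1 := by
    have := hN.sq_le_diag_add_one m n
    rw [hm] at this
    nlinarith [Nat.pos_of_ne_zero (pow_ne_zero_iff two_ne_zero |>.mp hn)]
  refine ⟨n, fun h => by simp [h, hm] at hmn, hmn, fun k hk => ?_⟩
  have hle : ∑ k, N m k ^ 2 ≤ ∑ k ∈ {n}, N m k ^ 2 := by simp [hrow, hmn]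
  exact pow_eq_zero_iff two_ne_zero |>.mp (eq_zero_of_sum_univ_le_sum hle (by simpa using hk))

lemma diag_eq_one_of_row_eq_single (hN : IsFibNIM N) {m n : M} (hnm : n ≠ m)
    (hmn : N m n = 1) (hrow : ∀ k ≠ n, N m k = 0) : N n n = 1 := by
  have hfus := hN.2 m n
  rwa [sum_eq_single n (fun k _ hk => by rw [hrow k hk, zero_mul]) (by simp), hmn, one_mul,
    if_neg hnm.symm, add_zero] at hfus

lemma row_eq_zero_of_diag_eq_one (hN : IsFibNIM N) {m n : M} (hnm : n ≠ m) (hmn : N m n = 1)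
    (hnn : N n n = 1) {k : M} (hkm : k ≠ m) (hkn : k ≠ n) : N n k = 0 := by
  have hle : ∑ j, N n j ^ 2 ≤ ∑ j ∈ {m, n}, N n j ^ 2 := by
    rw [hN.sum_sq_row, sum_pair hnm.symm, ← hN.1 m n, hmn, hnn]
    norm_num
  exact pow_eq_zero_iff two_ne_zero |>.mp (eq_zero_of_sum_univ_le_sum hle (by simp [hkm, hkn]))

end IsFibNIM

/-- Up to isomorphism there is only one connected NIM-graph for the Fibonacci fusion rule. -/
theorem fibonacci_unique_connected_NIM_graph
    {M : Type*} [Fintype M] [DecidableEq M] [Nonempty M]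
    (N : M → M → ℕ) (hN : IsFibNIM N) (hconn : FibNIMConnected N) :
    Fintype.card M = 2 ∧
      ∃ m n : M, m ≠ n ∧ N m m = 0 ∧ N m n = 1 ∧ N n m = 1 ∧ N n n = 1 := by
  obtain ⟨m, hm⟩ := hN.exists_diag_eq_zero
  obtain ⟨n, hnm, hmn, hrow⟩ := hN.row_eq_single_of_diag_eq_zero hm
  have hnn := hN.diag_eq_one_of_row_eq_single hnm hmn hrow
  have huniv : ({m, n} : Set M) = Set.univ := by
    refine hconn.eq_univ_of_forall_eq_zero ⟨m, by simp⟩ ?_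
    rintro a ha b hb
    simp only [Set.mem_insert_iff, Set.mem_singleton_iff, not_or] at ha hb
    rcases ha with rfl | rfl
    · exact hrow b hb.2
    · exact hN.row_eq_zero_of_diag_eq_one hnm hmn hnn hb.1 hb.2
  have hcard : Fintype.card M = 2 := by
    rw [← Nat.card_eq_fintype_card]
    exact Nat.card_eq_two_iff.mpr ⟨m, n, hnm.symm, huniv⟩
  exact ⟨hcard, m, n, hnm.symm, hm, hmn, hN.1 n m ▸ hmn, hnn⟩
end

section
/- Let M be a finite type and N₁, …, N_ℓ a commuting family of Fibonacci NIM-matrices on M. For m ∈ M write m̄ ∈ {0,1}^ℓ for the vector with m̄_i = (N_i) m m. If m ≠ n and (N_j) m n ≠ 0 for some j ∈ {1, …, ℓ}, then m̄ and n̄ are comparable in the componentwise partial order on {0,1}^ℓ: either (N_i) m m ≤ (N_i) n n for all i, or (N_i) n n ≤ (N_i) m m for all i. -/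
/-!
By symmetry the diagonal of `N² = N + I` reads `∑ₖ (N m k)² = N m m + 1`, so a row of a Fibonacci
NIM-matrix without a loop is a single entry `1`; off the diagonal it shows that the two ends of an
edge do not both carry a loop. Now let `m — n` be an edge of `N_j` with no `N_j`-loop at `m`.
Row `m` of `N_j` is then `e_n`, and comparing the `(m, n)` entries of `N_i N_j` and `N_j N_i` gives
`(N_i) m m ≤ (N_i N_j) m n = (N_j N_i) m n = (N_i) n n` for every `i`.
-/

namespace IsFibNIM

variable {M : Type*} [Fintype M] [DecidableEq M] {N : M → M → ℕ}

lemma sum_le_diag_add_one (h : IsFibNIM N) (m : M) : ∑ k, N m k ≤ N m m + 1 :=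
  calc ∑ k, N m k ≤ ∑ k, N m k * N k m :=
        Finset.sum_le_sum fun k _ => h.1 k m ▸ Nat.le_mul_self (N m k)
    _ = N m m + 1 := by simpa using h.2 m m

lemma row_eq_single_of_diag_eq_zero_s11 (h : IsFibNIM N) {m n : M} (hm : N m m = 0)
    (hmn : N m n ≠ 0) : N m = Pi.single n 1 := by
  have hsum : N m n + ∑ k ∈ Finset.univ.erase n, N m k ≤ 1 := by
    rw [Finset.add_sum_erase _ _ (Finset.mem_univ n)]
    simpa [hm] using h.sum_le_diag_add_one m
  have hrest : ∑ k ∈ Finset.univ.erase n, N m k = 0 := by omega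
  funext k
  by_cases hk : k = n
  · subst hk
    simp only [Pi.single_eq_same]
    omega
  · rw [Pi.single_eq_of_ne hk]
    exact (Finset.sum_eq_zero_iff.mp hrest) k (Finset.mem_erase.mpr ⟨hk, Finset.mem_univ k⟩)

lemma diag_add_le_one (h : IsFibNIM N) {m n : M} (hmn : m ≠ n) (hedge : N m n ≠ 0) :
    N m m + N n n ≤ 1 := by
  have hpair : N m m * N m n + N m n * N n n ≤ N m n := by
    calc N m m * N m n + N m n * N n n = ∑ k ∈ {m, n}, N m k * N k n :=
          (Finset.sum_pair (f := fun k => N m k * N k n) hmn).symm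
      _ ≤ ∑ k, N m k * N k n := Finset.sum_le_sum_of_subset (Finset.subset_univ _)
      _ = N m n := by simpa [hmn] using h.2 m n
  refine Nat.le_of_mul_le_mul_right (c := N m n) ?_ (Nat.pos_of_ne_zero hedge)
  linarith

lemma diag_le_diag_of_commute (hB : IsFibNIM N) {A : M → M → ℕ} {m n : M}
    (hc : ∑ k, A m k * N k n = ∑ k, N m k * A k n) (hm : N m m = 0) (hmn : N m n ≠ 0) :
    A m m ≤ A n n :=
  calc A m m ≤ A m m * N m n := Nat.le_mul_of_pos_right _ (Nat.pos_of_ne_zero hmn)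
    _ ≤ ∑ k, A m k * N k n :=
        Finset.single_le_sum (f := fun k => A m k * N k n) (fun _ _ => Nat.zero_le _)
          (Finset.mem_univ m)
    _ = ∑ k, N m k * A k n := hc
    _ = A n n := by simp [hB.row_eq_single_of_diag_eq_zero_s11 hm hmn, Pi.single_apply]

end IsFibNIM

/-- If two distinct nodes of a NIM-representation of `Fib^ℓ` are connected by an edge of some
colour, their diagonal vectors are comparable in the componentwise order on `{0,1}^ℓ`. -/
theorem fibonacci_NIM_diagonal_comparable
    {M : Type*} [Fintype M] [DecidableEq M] {ℓ : ℕ}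
    (N : Fin ℓ → M → M → ℕ)
    (hfib : ∀ i, IsFibNIM (N i))
    (hcomm : ∀ (i j : Fin ℓ) (m n : M),
      ∑ k, N i m k * N j k n = ∑ k, N j m k * N i k n)
    (m n : M) (hmn : m ≠ n) (j : Fin ℓ) (hedge : N j m n ≠ 0) :
    (∀ i, N i m m ≤ N i n n) ∨ (∀ i, N i n n ≤ N i m m) := by
  obtain hm | hn : N j m m = 0 ∨ N j n n = 0 := by
    have := (hfib j).diag_add_le_one hmn hedge
    omega
  · exact Or.inl fun i => (hfib j).diag_le_diag_of_commute (hcomm i j m n) hm hedge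
  · refine Or.inr fun i => (hfib j).diag_le_diag_of_commute (hcomm i j n m) hn ?_
    rwa [(hfib j).1 n m]
end

section
/- Let M be a finite type, N₁, …, N_k a commuting family of Fibonacci NIM-matrices on M, and m ∈ M an element such that (N_i) m m = 0 for all i and (N_i·N_j) m m = 0 for all i ≠ j (where (N_i·N_j) m m = ∑_{p} (N_i) m p * (N_j) p m). For ε ∈ {0,1}^k let N_ε denote the matrix product ∏_{i : ε_i = 1} N_i (well defined since the N_i commute), with N_0 = I. Then for all ε, η ∈ {0,1}^k one has (N_ε · N_η) m m = (if ε = η then 1 else 0). In particular the assignment ε ↦ N_ε δ_m defines an embedding of the free NIM-representation Fib^k into M. -/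
/-- For `ε ∈ {0,1}^k`, the product `N_ε = ∏_{i : ε i = 1} N_i` of the matrices of a
(commuting) family, taken in the order of the indices, with `N_0 = I`. -/
def fibProd {M : Type*} [Fintype M] [DecidableEq M] {k : ℕ}
    (N : Fin k → M → M → ℕ) (ε : Fin k → Bool) : Matrix M M ℕ :=
  (List.ofFn fun i : Fin k => if ε i then (Matrix.of (N i) : Matrix M M ℕ) else 1).prod

open Finset
open scoped symmDiff

section FibonacciProducts

variable {ι R : Type*} [DecidableEq ι] [CommSemiring R] {b : ι → R}

theorem prod_mul_self_eq_sum_powerset (hsq : ∀ i, b i * b i = b i + 1) (T : Finset ι) :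
    (∏ i ∈ T, b i) * ∏ i ∈ T, b i = ∑ U ∈ T.powerset, ∏ i ∈ U, b i := by
  rw [← prod_mul_distrib, prod_congr rfl fun i _ => hsq i, prod_add]
  simp only [prod_const_one, mul_one]

theorem prod_mul_prod_eq_sum_powerset (hsq : ∀ i, b i * b i = b i + 1) (E H : Finset ι) :
    (∏ i ∈ E, b i) * ∏ i ∈ H, b i =
      ∑ U ∈ (E ∩ H).powerset, ∏ i ∈ E ∆ H ∪ U, b i := by
  calc (∏ i ∈ E, b i) * ∏ i ∈ H, b i
      = ((∏ i ∈ E \ H, b i) * ∏ i ∈ H \ E, b i) *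
          ((∏ i ∈ E ∩ H, b i) * ∏ i ∈ E ∩ H, b i) := by
        rw [← prod_inter_mul_prod_sdiff E H, ← prod_inter_mul_prod_sdiff H E, inter_comm H E]
        ring
    _ = (∏ i ∈ E ∆ H, b i) * ∑ U ∈ (E ∩ H).powerset, ∏ i ∈ U, b i := by
        rw [← prod_union disjoint_sdiff_sdiff, prod_mul_self_eq_sum_powerset hsq]
        rfl
    _ = ∑ U ∈ (E ∩ H).powerset, ∏ i ∈ E ∆ H ∪ U, b i := by
        rw [mul_sum]
        refine sum_congr rfl fun U hU => (prod_union ?_).symm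
        exact Disjoint.mono_right (mem_powerset.mp hU) (disjoint_symmDiff_inf E H)

theorem mul_prod_eq_prod_add_prod_erase (hsq : ∀ i, b i * b i = b i + 1) {T : Finset ι} {i : ι}
    (hi : i ∈ T) : b i * ∏ j ∈ T, b j = ∏ j ∈ T, b j + ∏ j ∈ T.erase i, b j := by
  rw [← mul_prod_erase T b hi, ← mul_assoc, hsq, add_mul, one_mul]

end FibonacciProducts

theorem exists_eq_single_of_sum_mul_self_eq_one {M : Type*} [Fintype M] [DecidableEq M]
    {v : M → ℕ} (h : ∑ p, v p * v p = 1) : ∃ p, v = Pi.single p 1 := by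
  obtain ⟨p, -, hp⟩ := exists_ne_zero_of_sum_ne_zero (h ▸ one_ne_zero)
  have hsplit := add_sum_erase univ (fun q => v q * v q) (mem_univ p)
  rw [h] at hsplit
  have hvp : v p * v p = 1 := by have := Nat.one_le_iff_ne_zero.mpr hp; omega
  refine ⟨p, funext fun q => ?_⟩
  rcases eq_or_ne q p with rfl | hq
  · simpa using hvp
  · have hrest : ∑ q ∈ univ.erase p, v q * v q = 0 := by omega
    simpa [hq] using sum_eq_zero_iff.mp hrest q (mem_erase.mpr ⟨hq, mem_univ q⟩)

namespace Matrix

variable {M α : Type*} [Fintype M]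

theorem IsSymm.mul_self_apply_diag [NonUnitalNonAssocSemiring α] {A : Matrix M M α}
    (hA : A.IsSymm) (m : M) : (A * A) m m = ∑ p, A m p * A m p := by
  simp only [mul_apply, hA.apply m]

variable [DecidableEq M]

theorem mul_apply_of_row_eq_single [NonAssocSemiring α] {A B : Matrix M M α} {m p : M}
    (hA : A m = Pi.single p 1) (n : M) : (A * B) m n = B p n := by
  simp [mul_apply, hA, Pi.single_apply]

theorem exists_row_eq_single {A : Matrix M M ℕ} (hA : A.IsSymm) (hsq : A * A = A + 1)
    {m : M} (hmm : A m m = 0) : ∃ p, p ≠ m ∧ A m = Pi.single p 1 := by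
  have hnorm : ∑ p, A m p * A m p = 1 := by
    rw [← hA.mul_self_apply_diag, hsq, add_apply, hmm, one_apply_eq, zero_add]
  obtain ⟨p, hp⟩ := exists_eq_single_of_sum_mul_self_eq_one hnorm
  refine ⟨p, fun hpm => ?_, hp⟩
  simpa [hpm, hmm] using congr_fun hp m

theorem exists_injective_rows_eq_single {ι : Type*} {A : ι → Matrix M M ℕ}
    (hsq : ∀ i, A i * A i = A i + 1) (hsym : ∀ i, (A i).IsSymm) {m : M}
    (hd1 : ∀ i, A i m m = 0) (hd2 : ∀ i j, i ≠ j → (A i * A j) m m = 0) :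
    ∃ pt : ι → M,
      (∀ i, pt i ≠ m) ∧ Function.Injective pt ∧ ∀ i, A i m = Pi.single (pt i) 1 := by
  choose pt hptm hpt using fun i => exists_row_eq_single (hsym i) (hsq i) (hd1 i)
  refine ⟨pt, hptm, fun i j he => by_contra fun hij => ?_, hpt⟩
  have := hd2 i j hij
  rw [mul_apply_of_row_eq_single (hpt i), he, (hsym j).apply, hpt j] at this
  simp at this

end Matrix

section FreeEmbedding

open Matrix

variable {M ι R : Type*} [Fintype M] [DecidableEq M] [CommSemiring R]
  (φ : R →+* Matrix M M ℕ) {b : ι → R}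

theorem isSymm_map_prod (hsym : ∀ i, (φ (b i)).IsSymm) (T : Finset ι) :
    (φ (∏ i ∈ T, b i)).IsSymm := by
  refine prod_induction _ (fun x => (φ x).IsSymm) (fun x y hx hy => ?_)
    (by simp [isSymm_one]) fun i _ => hsym i
  change (φ (x * y))ᵀ = φ (x * y)
  rw [map_mul, transpose_mul, hx.eq, hy.eq, ← map_mul, mul_comm, map_mul]

variable [DecidableEq ι]

theorem map_prod_apply_diag_eq_zero (hsq : ∀ i, b i * b i = b i + 1)
    (hsym : ∀ i, (φ (b i)).IsSymm) {m : M} (hd1 : ∀ i, φ (b i) m m = 0)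
    (hd2 : ∀ i j, i ≠ j → (φ (b i) * φ (b j)) m m = 0) {T : Finset ι} (hT : T.Nonempty) :
    φ (∏ i ∈ T, b i) m m = 0 := by
  have hsqφ (i : ι) : φ (b i) * φ (b i) = φ (b i) + 1 := by
    rw [← map_mul, hsq, map_add, map_one]
  obtain ⟨pt, hptm, hpt_inj, hpt⟩ := exists_injective_rows_eq_single hsqφ hsym hd1 hd2
  induction T using Finset.strongInduction with
  | H T ih =>
    obtain ⟨i, rfl⟩ | ⟨i, hi, j, hj, hij⟩ := hT.exists_eq_singleton_or_nontrivial
    · simpa using hd1 i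
    have hTnt : T.Nontrivial := ⟨i, hi, j, hj, hij⟩
    set P := φ (∏ i ∈ T, b i) with hPdef
    have hP : P.IsSymm := isSymm_map_prod φ hsym T
    have hnorm : ∑ p, P m p * P m p = 1 + P m m := by
      rw [← hP.mul_self_apply_diag, hPdef, ← map_mul, prod_mul_self_eq_sum_powerset hsq,
        map_sum, Matrix.sum_apply, sum_eq_add_of_mem ∅ T (empty_mem_powerset T)
        (mem_powerset_self T) hT.ne_empty.symm]
      · simp
      · rintro U hU ⟨hU0, hUT⟩
        exact ih U (ssubset_of_subset_of_ne (mem_powerset.mp hU) hUT)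
          (nonempty_iff_ne_empty.mpr hU0)
    have hcol {i : ι} (hi : i ∈ T) : P m (pt i) = P m m := by
      rw [← hP.apply, ← mul_apply_of_row_eq_single (B := P) (hpt i), hPdef, ← map_mul,
        mul_prod_eq_prod_add_prod_erase hsq hi, map_add, Matrix.add_apply,
        ih _ (erase_ssubset hi) hTnt.erase_nonempty, add_zero]
    have h3 : ∑ p ∈ {m, pt i, pt j}, P m p * P m p ≤ ∑ p, P m p * P m p :=
      sum_le_sum_of_subset (subset_univ _)
    rw [sum_insert (by simp [(hptm i).symm, (hptm j).symm]),
      sum_insert (by simp [hpt_inj.ne hij]), sum_singleton, hcol hi, hcol hj, hnorm] at h3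
    nlinarith

theorem map_prod_mul_prod_apply_diag (hsq : ∀ i, b i * b i = b i + 1)
    (hsym : ∀ i, (φ (b i)).IsSymm) {m : M} (hd1 : ∀ i, φ (b i) m m = 0)
    (hd2 : ∀ i j, i ≠ j → (φ (b i) * φ (b j)) m m = 0) (E H : Finset ι) :
    (φ (∏ i ∈ E, b i) * φ (∏ i ∈ H, b i)) m m = if E = H then 1 else 0 := by
  have hdiag (T : Finset ι) : φ (∏ i ∈ T, b i) m m = if T = ∅ then 1 else 0 := by
    rcases T.eq_empty_or_nonempty with rfl | hT
    · simp
    · rw [if_neg hT.ne_empty, map_prod_apply_diag_eq_zero φ hsq hsym hd1 hd2 hT]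
  rw [← map_mul, prod_mul_prod_eq_sum_powerset hsq, map_sum, Matrix.sum_apply]
  simp only [hdiag, union_eq_empty, symmDiff_eq_empty]
  by_cases hEH : E = H <;> simp [hEH]

end FreeEmbedding

theorem fibProd_eq_map_prod {M R : Type*} [Fintype M] [DecidableEq M] [CommSemiring R] {k : ℕ}
    (N : Fin k → M → M → ℕ) (φ : R →+* Matrix M M ℕ) (b : Fin k → R)
    (hb : ∀ i, φ (b i) = Matrix.of (N i)) (ε : Fin k → Bool) :
    fibProd N ε = φ (∏ i with ε i, b i) := by
  rw [prod_filter, ← List.prod_ofFn, map_list_prod, List.map_ofFn, fibProd]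
  congr
  funext i
  simp [apply_ite φ, hb]

theorem filter_univ_eq_iff {ι : Type*} [Fintype ι] {ε η : ι → Bool} :
    univ.filter (fun i => ε i) = univ.filter (fun i => η i) ↔ ε = η := by
  simp only [filter_inj', mem_univ, true_implies, funext_iff, Bool.coe_iff_coe]

theorem IsFibNIM.isSymm {M : Type*} [Fintype M] [DecidableEq M] {N : M → M → ℕ}
    (h : IsFibNIM N) : (Matrix.of N).IsSymm :=
  Matrix.IsSymm.ext fun p q => h.1 q p

theorem IsFibNIM.mul_self {M : Type*} [Fintype M] [DecidableEq M] {N : M → M → ℕ}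
    (h : IsFibNIM N) : Matrix.of N * Matrix.of N = Matrix.of N + 1 := by
  ext p q
  simpa [Matrix.mul_apply, Matrix.one_apply] using h.2 p q

/-- If `(N_i) m m = 0` for all `i` and `(N_i N_j) m m = 0` for all `i ≠ j`, then the vectors
`N_ε δ_m`, `ε ∈ {0,1}^k`, are orthonormal: `(N_ε N_η) m m = δ_{ε,η}`. In particular
`ε ↦ N_ε δ_m` embeds the free NIM-representation `Fib^k` into `M`. -/
theorem fibonacci_NIM_free_embedding
    {M : Type*} [Fintype M] [DecidableEq M] {k : ℕ}
    (N : Fin k → M → M → ℕ)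
    (hfib : ∀ i, IsFibNIM (N i))
    (hcomm : ∀ (i j : Fin k) (m n : M),
      ∑ p, N i m p * N j p n = ∑ p, N j m p * N i p n)
    (m : M)
    (hdiag : ∀ i, N i m m = 0)
    (hdiag2 : ∀ i j : Fin k, i ≠ j → ∑ p, N i m p * N j p m = 0) :
    ∀ ε η : Fin k → Bool,
      (fibProd N ε * fibProd N η) m m = if ε = η then 1 else 0 := by
  let A : Fin k → Matrix M M ℕ := fun i => Matrix.of (N i)
  have hA_comm : ∀ x ∈ Set.range A, ∀ y ∈ Set.range A, x * y = y * x := by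
    rintro _ ⟨i, rfl⟩ _ ⟨j, rfl⟩
    ext p q
    exact hcomm i j p q
  -- The commuting `N_i` generate a commutative subsemiring, where products over finsets make sense.
  let S := Subsemiring.closure (Set.range A)
  have : IsMulCommutative S := Subsemiring.isMulCommutative_closure hA_comm
  let b : Fin k → S := fun i => ⟨A i, Subsemiring.subset_closure ⟨i, rfl⟩⟩
  have hsq (i : Fin k) : b i * b i = b i + 1 := Subtype.ext (hfib i).mul_self
  intro ε η
  open scoped IsMulCommutative in
  rw [fibProd_eq_map_prod N S.subtype b (fun _ => rfl),
    fibProd_eq_map_prod N S.subtype b (fun _ => rfl),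
    map_prod_mul_prod_apply_diag S.subtype hsq (fun i => (hfib i).isSymm) hdiag hdiag2]
  simp only [filter_univ_eq_iff]
end
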